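/- A G-graded commutative ring R is a Gelfand graded ring if and only if GSpec(R) is a normal topological space (any two disjoint closed sets can be separated by disjoint open sets). -/

import Mathlib

section GradedGelfand

variable {G : Type*} [AddGroup G] [DecidableEq G] {R : Type*} [CommRing R]
variable (𝒜 : G → AddSubgroup R) [GradedRing 𝒜]

/-- A homogeneous (graded) prime ideal: a proper graded ideal that is prime
with respect to homogeneous elements. -/
def IsGradedPrime (P : Ideal R) : Prop :=
  P.IsHomogeneous 𝒜 ∧ P ≠ ⊤ ∧
    ∀ a b : R, SetLike.IsHomogeneousElem 𝒜 a → SetLike.IsHomogeneousElem 𝒜 b →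
      a * b ∈ P → a ∈ P ∨ b ∈ P

/-- A graded maximal ideal: a proper graded ideal maximal among proper graded ideals. -/
def IsGradedMaximal (M : Ideal R) : Prop :=
  M.IsHomogeneous 𝒜 ∧ M ≠ ⊤ ∧
    ∀ J : Ideal R, J.IsHomogeneous 𝒜 → M ≤ J → J ≠ ⊤ → J = M

/-- The homogeneous prime spectrum of a graded ring. -/
def GSpec := { P : Ideal R // IsGradedPrime 𝒜 P }

/-- The Zariski topology on the homogeneous prime spectrum, generated by the basic
open sets `D_G(r)` for homogeneous `r`; the closed sets are exactly the `V_G(I)`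
for graded ideals `I`. -/
instance : TopologicalSpace (GSpec 𝒜) :=
  TopologicalSpace.generateFrom
    { U | ∃ r : R, SetLike.IsHomogeneousElem 𝒜 r ∧ U = { P : GSpec 𝒜 | r ∉ P.1 } }

/-- The set of graded maximal ideals inside the homogeneous prime spectrum. -/
def GMax : Set (GSpec 𝒜) := { P | IsGradedMaximal 𝒜 P.1 }

/-- A Gelfand graded ring: every homogeneous prime ideal is contained in a unique
graded maximal ideal. -/
def IsGelfandGraded : Prop :=
  ∀ P : Ideal R, IsGradedPrime 𝒜 P →
    ∃! M : Ideal R, IsGradedMaximal 𝒜 M ∧ P ≤ M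

/-- A pm⁺ graded ring: for every homogeneous prime `P`, the homogeneous primes
containing `P` form a chain. -/
def IsPMPlusGraded : Prop :=
  ∀ P Q Q' : Ideal R, IsGradedPrime 𝒜 P → IsGradedPrime 𝒜 Q → IsGradedPrime 𝒜 Q' →
    P ≤ Q → P ≤ Q' → Q ≤ Q' ∨ Q' ≤ Q

end GradedGelfand

/-!
Both directions run through the specialization order of `GSpec`, which is inclusion of ideals:
the closed points are the graded maximal ideals and every point specializes to one of them.

If `GSpec` is normal, two distinct closed points have disjoint neighbourhoods, and a common
generalization would lie in both; so a homogeneous prime lies under only one graded maximal ideal.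

Conversely, let `R` be Gelfand and `M ≠ N` graded maximal. Products `a * b` of homogeneous `a ∉ M`
and `b ∉ N` form a multiplicative set; if it missed `0`, a homogeneous prime avoiding it would lie
under both `M` and `N`. So some such `a * b` vanishes, and `D(a)`, `D(b)` are disjoint
neighbourhoods of `M` and `N`, hence of any generalizations of them. Points of disjoint closed
sets specialize to distinct closed points, and quasi-compactness turns this pointwise separation
into a separation of the closed sets.
-/

open Topology

theorem Specializes.eq_of_isClosed_singleton {X : Type*} [TopologicalSpace X] [NormalSpace X]
    {x y z : X} (hxy : x ⤳ y) (hxz : x ⤳ z) (hy : IsClosed {y}) (hz : IsClosed {z}) :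
    y = z := by
  by_contra hyz
  obtain ⟨U, V, hU, hV, hyU, hzV, hUV⟩ :=
    normal_separation hy hz (Set.disjoint_singleton.2 hyz)
  exact hUV.ne_of_mem (hxy.mem_open hU (hyU rfl)) (hxz.mem_open hV (hzV rfl)) rfl

section HomogeneousIdeal

variable {ι σ A : Type*} [Semiring A] [SetLike σ A] [AddSubmonoidClass σ A] {𝒜 : ι → σ}
variable [DecidableEq ι] [AddMonoid ι] [GradedRing 𝒜]

theorem Ideal.IsHomogeneous.le_of_forall_homogeneous {I J : Ideal A} (hI : I.IsHomogeneous 𝒜)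
    (h : ∀ r ∈ I, SetLike.IsHomogeneousElem 𝒜 r → r ∈ J) : I ≤ J := by
  rw [← hI.toIdeal_homogeneousCore_eq_self]
  exact Ideal.span_le.2 fun _ ⟨⟨r, hr⟩, hrI, hr'⟩ => hr' ▸ h r hrI hr

theorem Ideal.IsHomogeneous.exists_le_maximal_disjoint {I : Ideal A} (hI : I.IsHomogeneous 𝒜)
    {S : Set A} (hIS : Disjoint (I : Set A) S) :
    ∃ J, I ≤ J ∧ Maximal (fun J : Ideal A => J.IsHomogeneous 𝒜 ∧ Disjoint (J : Set A) S) J := by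
  refine zorn_le_nonempty₀ _ (fun c hc hchain J hJ => ?_) I ⟨hI, hIS⟩
  refine ⟨_, ⟨Ideal.IsHomogeneous.sSup fun K hK => (hc hK).1, Set.disjoint_left.2 fun s hs => ?_⟩,
    fun K hK => le_sSup hK⟩
  obtain ⟨K, hK, hsK⟩ := (Submodule.mem_sSup_of_directed ⟨J, hJ⟩ hchain.directedOn).1 hs
  exact Set.disjoint_left.1 (hc hK).2 hsK

end HomogeneousIdeal

section GradedPrime

variable {G : Type*} [AddGroup G] [DecidableEq G] {R : Type*} [CommRing R]
variable {𝒜 : G → AddSubgroup R} [GradedRing 𝒜]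

theorem isGradedPrime_of_maximal_disjoint {S : Submonoid R} {P : Ideal R}
    (hP : Maximal (fun J : Ideal R => J.IsHomogeneous 𝒜 ∧ Disjoint (J : Set R) S) P) :
    IsGradedPrime 𝒜 P := by
  have meets : ∀ x, SetLike.IsHomogeneousElem 𝒜 x → x ∉ P → ∃ s ∈ S, s ∈ P ⊔ Ideal.span {x} := by
    intro x hx hxP
    have hlt : P < P ⊔ Ideal.span {x} :=
      left_lt_sup.2 fun h => hxP (h (Ideal.mem_span_singleton_self x))
    have hhom : (P ⊔ Ideal.span {x}).IsHomogeneous 𝒜 :=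
      hP.prop.1.sup (Ideal.homogeneous_span 𝒜 _ (by simpa using hx))
    obtain ⟨s, hsP, hsS⟩ := Set.not_disjoint_iff.1 fun h => hP.not_prop_of_gt hlt ⟨hhom, h⟩
    exact ⟨s, hsS, hsP⟩
  refine ⟨hP.prop.1, fun h => Set.disjoint_left.1 hP.prop.2 (h ▸ Submodule.mem_top) S.one_mem,
    fun a b ha hb hab => ?_⟩
  by_contra! h
  obtain ⟨s, hs, hsa⟩ := meets a ha h.1
  obtain ⟨t, ht, htb⟩ := meets b hb h.2
  have hmul : (P ⊔ Ideal.span {a}) * (P ⊔ Ideal.span {b}) ≤ P := by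
    rw [Ideal.sup_mul, Ideal.mul_sup, Ideal.mul_sup, Ideal.span_singleton_mul_span_singleton]
    exact sup_le (sup_le Ideal.mul_le_left Ideal.mul_le_left)
      (sup_le Ideal.mul_le_right ((Ideal.span_singleton_le_iff_mem _).2 hab))
  exact Set.disjoint_left.1 hP.prop.2 (hmul (Ideal.mul_mem_mul hsa htb)) (S.mul_mem hs ht)

-- An ideal avoids the trivial submonoid `⊥ = {1}` exactly when it is proper.
theorem isGradedMaximal_iff_maximal {M : Ideal R} :
    IsGradedMaximal 𝒜 M ↔ Maximal
      (fun J : Ideal R => J.IsHomogeneous 𝒜 ∧ Disjoint (J : Set R) (⊥ : Submonoid R)) M := by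
  simp only [Submonoid.coe_bot, Set.disjoint_singleton_right, SetLike.mem_coe,
    ← Ideal.ne_top_iff_one]
  exact ⟨fun ⟨hM, hMtop, hmax⟩ => ⟨⟨hM, hMtop⟩, fun J ⟨hJ, hJtop⟩ hMJ => (hmax J hJ hMJ hJtop).le⟩,
    fun ⟨⟨hM, hMtop⟩, hmax⟩ =>
      ⟨hM, hMtop, fun J hJ hMJ hJtop => le_antisymm (hmax ⟨hJ, hJtop⟩ hMJ) hMJ⟩⟩

theorem IsGradedMaximal.isGradedPrime {M : Ideal R} (hM : IsGradedMaximal 𝒜 M) :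
    IsGradedPrime 𝒜 M :=
  isGradedPrime_of_maximal_disjoint (isGradedMaximal_iff_maximal.1 hM)

theorem Ideal.IsHomogeneous.exists_le_isGradedMaximal {I : Ideal R} (hI : I.IsHomogeneous 𝒜)
    (hI' : I ≠ ⊤) : ∃ M, IsGradedMaximal 𝒜 M ∧ I ≤ M := by
  obtain ⟨M, hIM, hM⟩ := hI.exists_le_maximal_disjoint (S := ((⊥ : Submonoid R) : Set R))
    (by simpa [Submonoid.coe_bot, ← Ideal.ne_top_iff_one] using hI')
  exact ⟨M, isGradedMaximal_iff_maximal.2 hM, hIM⟩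

variable (𝒜) in
theorem exists_isGradedPrime_disjoint (S : Submonoid R) (h0 : (0 : R) ∉ S) :
    ∃ P, IsGradedPrime 𝒜 P ∧ Disjoint (P : Set R) S := by
  obtain ⟨P, -, hP⟩ :=
    (Ideal.IsHomogeneous.bot 𝒜).exists_le_maximal_disjoint (S := S) (by simpa using h0)
  exact ⟨P, isGradedPrime_of_maximal_disjoint hP, hP.prop.2⟩

def IsGradedPrime.homogeneousCompl {P : Ideal R} (hP : IsGradedPrime 𝒜 P) : Submonoid R where
  carrier := {r | SetLike.IsHomogeneousElem 𝒜 r ∧ r ∉ P}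
  mul_mem' ha hb := ⟨ha.1.mul hb.1, fun h => (hP.2.2 _ _ ha.1 hb.1 h).elim ha.2 hb.2⟩
  one_mem' := ⟨SetLike.isHomogeneousElem_one 𝒜, (Ideal.ne_top_iff_one P).1 hP.2.1⟩

theorem IsGradedPrime.le_of_disjoint_homogeneousCompl {P Q : Ideal R} (hP : IsGradedPrime 𝒜 P)
    (hQ : Q.IsHomogeneous 𝒜) (h : Disjoint (Q : Set R) hP.homogeneousCompl) : Q ≤ P :=
  hQ.le_of_forall_homogeneous fun _ hrQ hr =>
    by_contra fun hrP => Set.disjoint_left.1 h hrQ ⟨hr, hrP⟩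

theorem IsGelfandGraded.exists_mul_eq_zero (hR : IsGelfandGraded 𝒜) {M N : Ideal R}
    (hM : IsGradedMaximal 𝒜 M) (hN : IsGradedMaximal 𝒜 N) (hMN : M ≠ N) :
    ∃ a b, SetLike.IsHomogeneousElem 𝒜 a ∧ SetLike.IsHomogeneousElem 𝒜 b ∧
      a ∉ M ∧ b ∉ N ∧ a * b = 0 := by
  set S := hM.isGradedPrime.homogeneousCompl ⊔ hN.isGradedPrime.homogeneousCompl
  by_cases h0 : (0 : R) ∈ S
  · obtain ⟨a, ⟨ha, haM⟩, b, ⟨hb, hbN⟩, hab⟩ := Submonoid.mem_sup.1 h0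
    exact ⟨a, b, ha, hb, haM, hbN, hab⟩
  obtain ⟨P, hP, hPS⟩ := exists_isGradedPrime_disjoint 𝒜 S h0
  have hPM : P ≤ M := hM.isGradedPrime.le_of_disjoint_homogeneousCompl hP.1
    (hPS.mono_right (SetLike.coe_subset_coe.2 le_sup_left))
  have hPN : P ≤ N := hN.isGradedPrime.le_of_disjoint_homogeneousCompl hP.1
    (hPS.mono_right (SetLike.coe_subset_coe.2 le_sup_right))
  exact absurd ((hR P hP).unique ⟨hM, hPM⟩ ⟨hN, hPN⟩) hMN

end GradedPrime

namespace GSpec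

variable {G : Type*} [AddGroup G] [DecidableEq G] {R : Type*} [CommRing R]
variable {𝒜 : G → AddSubgroup R} [GradedRing 𝒜]

theorem isOpen_basicOpen {r : R} (hr : SetLike.IsHomogeneousElem 𝒜 r) :
    IsOpen {P : GSpec 𝒜 | r ∉ P.1} :=
  TopologicalSpace.GenerateOpen.basic _ ⟨r, hr, rfl⟩

theorem specializes_iff {x y : GSpec 𝒜} : x ⤳ y ↔ x.1 ≤ y.1 := by
  refine (Filter.tendsto_id'.symm.trans TopologicalSpace.tendsto_nhds_generateFrom_iff).trans
    ⟨fun h => ?_, fun h => ?_⟩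
  · refine x.2.1.le_of_forall_homogeneous fun r hrx hr => by_contra fun hry => ?_
    exact mem_of_mem_nhds (h _ ⟨r, hr, rfl⟩ hry) hrx
  · rintro _ ⟨r, hr, rfl⟩ hry
    exact (isOpen_basicOpen hr).mem_nhds fun hrx => hry (h hrx)

theorem isClosed_singleton {x : GSpec 𝒜} (hx : x ∈ GMax 𝒜) : IsClosed {x} :=
  closure_subset_iff_isClosed.1 fun y hy =>
    Subtype.ext (hx.2.2 y.1 y.2.1 (specializes_iff.1 (specializes_iff_mem_closure.2 hy)) y.2.2.1)

theorem exists_specializes_mem_gMax (x : GSpec 𝒜) : ∃ M ∈ GMax 𝒜, x ⤳ M := by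
  obtain ⟨M, hM, hxM⟩ := x.2.1.exists_le_isGradedMaximal x.2.2.1
  exact ⟨⟨M, hM.isGradedPrime⟩, hM, specializes_iff.2 hxM⟩

instance : CompactSpace (GSpec 𝒜) := by
  refine compactSpace_generateFrom rfl fun 𝒰 h𝒰 hcover => ?_
  set T := {r : R | SetLike.IsHomogeneousElem 𝒜 r ∧ {P : GSpec 𝒜 | r ∉ P.1} ∈ 𝒰}
  have hT : Ideal.span T = ⊤ := by
    by_contra hne
    obtain ⟨M, hM, hTM⟩ :=
      (Ideal.homogeneous_span 𝒜 T fun r hr => hr.1).exists_le_isGradedMaximal hne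
    obtain ⟨U, hU, hMU⟩ := Set.mem_sUnion.1
      (hcover.symm ▸ Set.mem_univ (⟨M, hM.isGradedPrime⟩ : GSpec 𝒜))
    obtain ⟨r, hr, rfl⟩ := h𝒰 hU
    exact hMU (hTM (Ideal.subset_span ⟨hr, hU⟩))
  obtain ⟨T₀, hT₀T, hT₀⟩ :=
    Submodule.mem_span_finite_of_mem_span (hT ▸ Submodule.mem_top : (1 : R) ∈ Ideal.span T)
  refine ⟨(fun r => {P : GSpec 𝒜 | r ∉ P.1}) '' T₀, ?_, T₀.finite_toSet.image _, ?_⟩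
  · rintro _ ⟨r, hr, rfl⟩
    exact (hT₀T hr).2
  · refine Set.eq_univ_of_forall fun y => by_contra fun hy => ?_
    refine y.2.2.1 ((Ideal.eq_top_iff_one _).2 ?_)
    exact Ideal.span_le.2 (fun r hr => by_contra fun hry => hy ⟨_, ⟨r, hr, rfl⟩, hry⟩) hT₀

theorem _root_.IsGelfandGraded.disjoint_nhds (hR : IsGelfandGraded 𝒜) {M N : GSpec 𝒜}
    (hM : M ∈ GMax 𝒜) (hN : N ∈ GMax 𝒜) (hMN : M ≠ N) : Disjoint (𝓝 M) (𝓝 N) := by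
  obtain ⟨a, b, ha, hb, haM, hbN, hab⟩ :=
    hR.exists_mul_eq_zero hM hN (Subtype.coe_injective.ne hMN)
  refine Filter.disjoint_of_disjoint_of_mem ?_ ((isOpen_basicOpen ha).mem_nhds haM)
    ((isOpen_basicOpen hb).mem_nhds hbN)
  exact Set.disjoint_left.2 fun P haP hbP => (P.2.2.2 a b ha hb (hab ▸ P.1.zero_mem)).elim haP hbP

end GSpec

section Statements

variable {G : Type*} [AddGroup G] [DecidableEq G] {R : Type*} [CommRing R]
variable (𝒜 : G → AddSubgroup R) [GradedRing 𝒜]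

theorem stmt_8 : IsGelfandGraded 𝒜 ↔ NormalSpace (GSpec 𝒜) := by
  constructor
  · refine fun hR => ⟨fun C D hC hD hCD => separatedNhds_iff_disjoint.2 ?_⟩
    refine hC.isCompact.disjoint_nhdsSet_left.2 fun x hx =>
      hD.isCompact.disjoint_nhdsSet_right.2 fun y hy => ?_
    obtain ⟨M, hM, hxM⟩ := GSpec.exists_specializes_mem_gMax x
    obtain ⟨N, hN, hyN⟩ := GSpec.exists_specializes_mem_gMax y
    have hMN : M ≠ N := hCD.ne_of_mem (hxM.mem_closed hC hx) (hyN.mem_closed hD hy)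
    exact (hR.disjoint_nhds hM hN hMN).mono hxM hyN
  · intro _ P hP
    obtain ⟨M, hM, hPM⟩ := hP.1.exists_le_isGradedMaximal hP.2.1
    refine ⟨M, ⟨hM, hPM⟩, fun N ⟨hN, hPN⟩ => ?_⟩
    have specializes : ∀ {L} (hL : IsGradedMaximal 𝒜 L), P ≤ L →
        Specializes (X := GSpec 𝒜) ⟨P, hP⟩ ⟨L, hL.isGradedPrime⟩ :=
      fun _ h => GSpec.specializes_iff.2 h
    exact congrArg Subtype.val ((specializes hN hPN).eq_of_isClosed_singleton (specializes hM hPM)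
      (GSpec.isClosed_singleton hN) (GSpec.isClosed_singleton hM))

end Statements
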